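/- For an ordered multi-index J and a sub-multi-index I ⊆ J with complement K = J \ I, one has e_I · e_J = (-1)^{|K|(n-|J|)} e_K when the ordered union I ∪ K is an even permutation of J; and e_I · e_J = 0 whenever I ⊄ J. -/

import Mathlib

open ExteriorAlgebra MeasureTheory

noncomputable section

abbrev Evec (n : ℕ) := EuclideanSpace ℝ (Fin n)
abbrev ExtA (n : ℕ) := ExteriorAlgebra ℝ (Evec n)

/-- the `i`-th standard orthonormal basis vector of `ℝ^n`. -/
def ee {n : ℕ} (i : Fin n) : Evec n := EuclideanSpace.single i 1

/-- the basis multivector `e_I = e_{i₁} ∧ … ∧ e_{i_k}` for a multi-index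
`I = (i₁ < … < i_k)`. -/
def eWedge {n : ℕ} (I : Finset (Fin n)) : ExtA n :=
  ((I.sort (· ≤ ·)).map (fun i => ι ℝ (ee i))).prod

/-- the sign `(-1)^{#{(i,j) ∈ I × Iᶜ | j < i}}`; it is `+1` exactly when the
concatenation of `I` and `Iᶜ` (each written in increasing order) is an even
permutation of `(1,…,n)`. -/
def shuffleSign {n : ℕ} (I : Finset (Fin n)) : ℤ :=
  (-1) ^ ((I ×ˢ Iᶜ).filter (fun p => p.2 < p.1)).card

/-- A linear endomorphism of the exterior algebra of `ℝ^n` is *the* Hodge star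
operator iff it sends each basis multivector `e_I` to `± e_{Iᶜ}`, the sign
being `+1` exactly when `(I, Iᶜ)` is an even permutation of `(1,…,n)`. -/
def IsHodgeStar {n : ℕ} (star : ExtA n →ₗ[ℝ] ExtA n) : Prop :=
  ∀ I : Finset (Fin n), star (eWedge I) = shuffleSign I • eWedge Iᶜ

/-- the scalar (degree-0) part of an element of the exterior algebra. -/
def sc {n : ℕ} (x : ExtA n) : ℝ := algebraMapInv x

/-- the number of inversions of a list of naturals; a list whose entries form a
permutation of a sorted list is an even permutation of it iff its inversion
count is even. -/
def invCount (l : List ℕ) : ℕ :=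
  ((Finset.range l.length ×ˢ Finset.range l.length).filter
    (fun p => p.1 < p.2 ∧ l.getD p.2 0 < l.getD p.1 0)).card

/-! On basis multivectors everything is a sign: `⋆ e_J = ± e_{Jᶜ}`, and `e_I ∧ e_{Jᶜ}` vanishes
unless `I` and `Jᶜ` are disjoint (i.e. `I ⊆ J`), in which case it is `(-1)^{inv(I, Jᶜ)} e_{I ∪ Jᶜ}`,
where `inv(A, B)` counts the pairs `(a, b) ∈ A × B` with `b < a`. Applying `⋆` once more gives
`± e_{J \ I}`. Since `inv` is additive in its first argument and `inv(K, C) + inv(C, K) = |K| |C|`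
for disjoint `K, C`, the total exponent is `inv(I, K) + |K| (n - |J|)` modulo 2, and `inv(I, K)`
is exactly the inversion count of the concatenation of `I` and `K`. -/

open Finset

theorem invCount_eq_sum (l : List ℕ) :
    invCount l = ∑ i ∈ range l.length, ∑ j ∈ range l.length,
      if i < j ∧ l.getD j 0 < l.getD i 0 then 1 else 0 := by
  rw [invCount, card_filter, sum_product]

theorem List.countP_eq_sum_range {α : Type*} (p : α → Bool) (l : List α) (d : α) :
    l.countP p = ∑ j ∈ Finset.range l.length, if p (l.getD j d) then 1 else 0 := by
  induction l with
  | nil => simp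
  | cons a l ih =>
    rw [List.countP_cons, ih, List.length_cons, Finset.sum_range_succ']
    simp

theorem invCount_cons (a : ℕ) (l : List ℕ) :
    invCount (a :: l) = l.countP (· < a) + invCount l := by
  simp only [invCount_eq_sum, List.length_cons, sum_range_succ', List.getD_cons_succ,
    List.getD_cons_zero, List.countP_eq_sum_range _ l 0]
  simp [add_comm]

theorem invCount_append (l₁ l₂ : List ℕ) :
    invCount (l₁ ++ l₂) =
      invCount l₁ + invCount l₂ + (l₁.map fun a => l₂.countP (· < a)).sum := by
  induction l₁ with
  | nil => simp [invCount]
  | cons a l ih =>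
    rw [List.cons_append, invCount_cons, invCount_cons, ih, List.countP_append]
    simp only [List.map_cons, List.sum_cons]
    ring

theorem invCount_eq_zero_of_pairwise {l : List ℕ} (h : l.Pairwise (· < ·)) :
    invCount l = 0 := by
  induction l with
  | nil => simp [invCount]
  | cons a l ih =>
    rw [List.pairwise_cons] at h
    rw [invCount_cons, ih h.2, List.countP_eq_zero.mpr fun b hb => by simpa using (h.1 b hb).le]

def crossInv {α : Type*} [LinearOrder α] (A B : Finset α) : ℕ := #{p ∈ A ×ˢ B | p.2 < p.1}

theorem crossInv_eq_sum {α : Type*} [LinearOrder α] (A B : Finset α) :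
    crossInv A B = ∑ a ∈ A, #{b ∈ B | b < a} := by
  rw [crossInv, card_filter, sum_product]
  simp only [card_filter]

theorem Finset.countP_sort {α : Type*} [LinearOrder α] (s : Finset α) (p : α → Prop)
    [DecidablePred p] : (s.sort (· ≤ ·)).countP (p ·) = #{a ∈ s | p a} := by
  rw [← Multiset.coe_countP, sort_eq, Multiset.countP_eq_card_filter]; rfl

theorem Finset.sum_map_sort {α M : Type*} [LinearOrder α] [AddCommMonoid M] (s : Finset α)
    (f : α → M) : ((s.sort (· ≤ ·)).map f).sum = ∑ a ∈ s, f a := by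
  rw [Finset.sum, ← Multiset.sum_coe, ← Multiset.map_coe, sort_eq]

section crossInv

variable {α : Type*} [LinearOrder α]

theorem crossInv_union_left {A B : Finset α} (h : Disjoint A B) (C : Finset α) :
    crossInv (A ∪ B) C = crossInv A C + crossInv B C := by
  simp only [crossInv_eq_sum, sum_union h]

theorem crossInv_insert_left {a : α} {A : Finset α} (h : a ∉ A) (B : Finset α) :
    crossInv (insert a A) B = #{b ∈ B | b < a} + crossInv A B := by
  simp only [crossInv_eq_sum, sum_insert h]

theorem crossInv_add_crossInv_swap {A B : Finset α} (h : Disjoint A B) :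
    crossInv A B + crossInv B A = #A * #B := by
  have hswap : crossInv B A = #{p ∈ A ×ˢ B | ¬ p.2 < p.1} := by
    refine card_equiv (Equiv.prodComm α α) fun p => ?_
    grind [disjoint_left]
  rw [hswap, crossInv, card_filter_add_card_filter_not, card_product]

-- The exponent of the sign in `⋆(e_I ∧ ⋆e_J)`, with `C = Jᶜ`.
theorem crossInv_sdiff_exponent {I J C : Finset α} (hIJ : I ⊆ J)
    (hJC : Disjoint J C) :
    crossInv J C + crossInv I C + crossInv (I ∪ C) (J \ I)
      = 2 * crossInv I C + crossInv I (J \ I) + #(J \ I) * #C := by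
  have hJ : crossInv J C = crossInv I C + crossInv (J \ I) C := by
    rw [← crossInv_union_left disjoint_sdiff, union_sdiff_of_subset hIJ]
  have hIC : Disjoint I C := hJC.mono_left hIJ
  rw [hJ, crossInv_union_left hIC,
    ← crossInv_add_crossInv_swap (hJC.mono_left sdiff_subset)]
  ring

end crossInv

theorem invCount_sort_append_sort {n : ℕ} (I K : Finset (Fin n)) :
    invCount ((I.sort (· ≤ ·) ++ K.sort (· ≤ ·)).map Fin.val) = crossInv I K := by
  have hsorted (s : Finset (Fin n)) : ((s.sort (· ≤ ·)).map Fin.val).Pairwise (· < ·) :=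
    List.pairwise_map.mpr (List.sortedLT_iff_pairwise.mp s.sortedLT_sort)
  rw [List.map_append, invCount_append, invCount_eq_zero_of_pairwise (hsorted I),
    invCount_eq_zero_of_pairwise (hsorted K), crossInv_eq_sum, List.map_map, zero_add, zero_add,
    Finset.sum_map_sort]
  simp only [Function.comp_def, List.countP_map, Fin.val_fin_lt, Finset.countP_sort]

theorem neg_one_pow_zsmul_eq_zero_iff {M : Type*} [AddCommGroup M] {k : ℕ} {x : M} :
    (-1 : ℤ) ^ k • x = 0 ↔ x = 0 := by
  rcases neg_one_pow_eq_or ℤ k with h | h <;> simp [h]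

section eWedge

variable {n : ℕ}

theorem eWedge_empty : eWedge (∅ : Finset (Fin n)) = 1 := by
  simp [eWedge]

theorem eWedge_insert_of_lt {a : Fin n} {s : Finset (Fin n)} (h : ∀ b ∈ s, a < b) :
    eWedge (insert a s) = ι ℝ (ee a) * eWedge s := by
  rw [eWedge, sort_insert _ (fun b hb => (h b hb).le) fun ha => (h a ha).false]
  simp [eWedge]

theorem eWedge_singleton (a : Fin n) : eWedge {a} = ι ℝ (ee a) := by
  rw [← insert_empty, eWedge_insert_of_lt (by simp), eWedge_empty, mul_one]

theorem ι_mul_eWedge_of_notMem {b : Fin n} {s : Finset (Fin n)} (hb : b ∉ s) :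
    ι ℝ (ee b) * eWedge s = (-1 : ℤ) ^ #{a ∈ s | a < b} • eWedge (insert b s) := by
  induction s using Finset.induction_on_min with
  | empty => simp [eWedge_singleton, eWedge_empty]
  | insert a s has ih =>
    obtain ⟨hba, hbs⟩ : b ≠ a ∧ b ∉ s := by simpa using hb
    rcases hba.lt_or_gt with hlt | hgt
    · have hfilter : {x ∈ insert a s | x < b} = ∅ :=
        filter_eq_empty_iff.mpr fun x hx hxb => by grind
      rw [hfilter, card_empty, pow_zero, one_smul,
        eWedge_insert_of_lt (s := insert a s) (by grind)]
    · have hfilter : {x ∈ insert a s | x < b} = insert a {x ∈ s | x < b} := by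
        rw [filter_insert, if_pos hgt]
      rw [hfilter, card_insert_of_notMem (by grind), eWedge_insert_of_lt has, ← mul_assoc,
        eq_neg_of_add_eq_zero_left (ι_add_mul_swap _ _), neg_mul, mul_assoc, ih hbs, mul_smul_comm,
        Finset.insert_comm, ← eWedge_insert_of_lt (by grind), pow_succ, mul_neg_one, neg_smul]

theorem ι_mul_eWedge_of_mem {b : Fin n} {s : Finset (Fin n)} (hb : b ∈ s) :
    ι ℝ (ee b) * eWedge s = 0 := by
  have key := congrArg (ι ℝ (ee b) * ·) (ι_mul_eWedge_of_notMem (notMem_erase b s))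
  rw [insert_erase hb, ← mul_assoc, ι_sq_zero, zero_mul, mul_smul_comm] at key
  exact neg_one_pow_zsmul_eq_zero_iff.mp key.symm

theorem eWedge_mul_eWedge_of_disjoint {A B : Finset (Fin n)} (h : Disjoint A B) :
    eWedge A * eWedge B = (-1 : ℤ) ^ crossInv A B • eWedge (A ∪ B) := by
  induction A using Finset.induction_on_min with
  | empty => simp [eWedge_empty, crossInv]
  | insert a s has ih =>
    obtain ⟨haB, hsB⟩ : a ∉ B ∧ Disjoint s B := by simpa using h
    have has' : a ∉ s := fun ha => (has a ha).false
    have hfilter : {x ∈ s ∪ B | x < a} = {x ∈ B | x < a} := by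
      rw [filter_union, filter_eq_empty_iff.mpr fun x hx => (has x hx).not_gt, empty_union]
    rw [eWedge_insert_of_lt has, mul_assoc, ih hsB, mul_smul_comm,
      ι_mul_eWedge_of_notMem (by simp [haB, has']), hfilter, smul_smul, ← pow_add, add_comm,
      crossInv_insert_left has', insert_union]

theorem eWedge_mul_eWedge_of_not_disjoint {A B : Finset (Fin n)} (h : ¬ Disjoint A B) :
    eWedge A * eWedge B = 0 := by
  obtain ⟨x, hxA, hxB⟩ := not_disjoint_iff.mp h
  have hsplit := eWedge_mul_eWedge_of_disjoint (disjoint_singleton_right.mpr (notMem_erase x A))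
  rw [union_comm, ← insert_eq, insert_erase hxA] at hsplit
  have key : (-1 : ℤ) ^ crossInv (A.erase x) {x} • (eWedge A * eWedge B) = 0 := by
    rw [← smul_mul_assoc, ← hsplit, eWedge_singleton, mul_assoc, ι_mul_eWedge_of_mem hxB,
      mul_zero]
  exact neg_one_pow_zsmul_eq_zero_iff.mp key

end eWedge

theorem shuffleSign_eq_neg_one_pow_crossInv {n : ℕ} (I : Finset (Fin n)) :
    shuffleSign I = (-1) ^ crossInv I Iᶜ :=
  rfl

/-- For an ordered multi-index `J` and a sub-multi-index `I ⊆ J`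
with complement `K = J \ I`: if the ordered union `I ∪ K` is an even permutation
of `J` (equivalently the concatenated list `I, K` has evenly many inversions), then
`e_I · e_J = (-1)^{|K| (n - |J|)} e_K`; and `e_I · e_J = 0` whenever `I ⊄ J`. -/
theorem dot_basis {n : ℕ}
    (star : ExtA n →ₗ[ℝ] ExtA n) (hstar : IsHodgeStar star)
    (I J : Finset (Fin n)) :
    (I ⊆ J →
      Even (invCount (((I.sort (· ≤ ·)) ++ ((J \ I).sort (· ≤ ·))).map Fin.val)) →
      star (eWedge I * star (eWedge J)) =
        ((-1 : ℤ) ^ ((J \ I).card * (n - J.card))) • eWedge (J \ I)) ∧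
    (¬ I ⊆ J → star (eWedge I * star (eWedge J)) = 0) := by
  refine ⟨fun hIJ heven => ?_, fun hIJ => ?_⟩
  · rw [invCount_sort_append_sort] at heven
    have hcompl : (I ∪ Jᶜ)ᶜ = J \ I := by
      rw [compl_union, compl_compl, inter_comm, sdiff_eq_inter_compl]
    have hprod : eWedge I * star (eWedge J)
        = (shuffleSign J * (-1) ^ crossInv I Jᶜ) • eWedge (I ∪ Jᶜ) := by
      rw [hstar J, mul_smul_comm,
        eWedge_mul_eWedge_of_disjoint (disjoint_compl_right.mono_left hIJ), smul_smul]
    have hexp := crossInv_sdiff_exponent hIJ disjoint_compl_right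
    rw [card_compl, Fintype.card_fin] at hexp
    have hsign : shuffleSign J * (-1) ^ crossInv I Jᶜ * shuffleSign (I ∪ Jᶜ)
        = (-1) ^ (#(J \ I) * (n - #J)) := by
      rw [shuffleSign_eq_neg_one_pow_crossInv, shuffleSign_eq_neg_one_pow_crossInv, hcompl,
        ← pow_add, ← pow_add, hexp, pow_add, pow_add, pow_mul, neg_one_sq, one_pow, one_mul,
        heven.neg_one_pow, one_mul]
    rw [hprod, map_zsmul, hstar, hcompl, smul_smul, hsign]
  · rw [hstar J, mul_smul_comm, map_zsmul,
      eWedge_mul_eWedge_of_not_disjoint (by rwa [disjoint_compl_right_iff]), map_zero, smul_zero]
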